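/- Let Q be a based groupoid quantale over a frame A, and let X be a stably supported Q-module. Then the map A → X, a ↦ a▹1_X, is right adjoint to ς_X : X → A; that is, for all x ∈ X and a ∈ A one has ς_X(x) ≤ a if and only if x ≤ a▹1_X. In particular, ς_X preserves arbitrary suprema. -/

import Mathlib

/-!
`x = ς(x) ▹ x ≤ ς(x) ▹ 1` gives `ς(x) ≤ a → x ≤ a ▹ 1`. Conversely `x ≤ ⟨x, x⟩ · 1`, so stability
gives `ς(x) ≤ ς_Q ⟨x, x⟩`; if `x ≤ a ▹ 1` then `⟨x, x⟩ ≤ ⟨a ▹ 1, 1⟩ = a ▹ ⟨1, 1⟩`, whose support is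
below `a` by equivariance. Preservation of suprema is then that of any left adjoint.
-/

/-- A based groupoid quantale over a frame `A`: a frame `Q` (with top `1_Q`)
equipped with a sup-preserving associative multiplication, an involution,
unital left/right `A`-actions and an equivariant support `ς_Q : Q → A`. -/
structure BasedGroupoidQuantale (A : Type*) (Q : Type*)
    [Order.Frame A] [Order.Frame Q] where
  mul : Q → Q → Q
  star : Q → Q
  lres : A → Q → Q          -- `a ▹ q`
  rres : Q → A → Q          -- `q ◃ a`
  suppQ : Q → A             -- `ς_Q`
  mul_assoc : ∀ p q r, mul (mul p q) r = mul p (mul q r)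
  mul_sSup_left : ∀ (S : Set Q) (q : Q), mul (sSup S) q = ⨆ p ∈ S, mul p q
  mul_sSup_right : ∀ (p : Q) (S : Set Q), mul p (sSup S) = ⨆ q ∈ S, mul p q
  star_star : ∀ q, star (star q) = q
  star_mul : ∀ p q, star (mul p q) = mul (star q) (star p)
  star_sSup : ∀ (S : Set Q), star (sSup S) = ⨆ q ∈ S, star q
  lres_top_act : ∀ q, lres ⊤ q = q
  rres_top_act : ∀ q, rres q ⊤ = q
  lres_sSup_left : ∀ (S : Set A) (q : Q), lres (sSup S) q = ⨆ a ∈ S, lres a q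
  lres_sSup_right : ∀ (a : A) (S : Set Q), lres a (sSup S) = ⨆ q ∈ S, lres a q
  rres_sSup_left : ∀ (S : Set Q) (a : A), rres (sSup S) a = ⨆ q ∈ S, rres q a
  rres_sSup_right : ∀ (q : Q) (S : Set A), rres q (sSup S) = ⨆ a ∈ S, rres q a
  lres_lres : ∀ a b q, lres a (lres b q) = lres (a ⊓ b) q
  lres_rres_comm : ∀ a q b, rres (lres a q) b = lres a (rres q b)
  lres_mul : ∀ a p q, mul (lres a p) q = lres a (mul p q)
  rres_mul : ∀ p a q, mul (rres p a) q = mul p (lres a q)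
  mul_rres : ∀ p q a, rres (mul p q) a = mul p (rres q a)
  star_lres_rres : ∀ a q b, star (lres a (rres q b)) = lres b (rres (star q) a)
  lres_inf : ∀ a q m, lres a q ⊓ m = lres a (q ⊓ m)
  inf_rres : ∀ m q a, m ⊓ rres q a = rres (q ⊓ m) a
  suppQ_sSup : ∀ (S : Set Q), suppQ (sSup S) = ⨆ q ∈ S, suppQ q
  suppQ_top : suppQ ⊤ = ⊤
  suppQ_le_mul : ∀ q p, lres (suppQ q) p ≤ mul (mul q (star q)) p
  suppQ_lres : ∀ q, lres (suppQ q) q = q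
  suppQ_equivariant : ∀ a q, suppQ (lres a q) = a ⊓ suppQ q

/-- A pre-Hilbert `Q`-module: a frame `X` (with top `1_X`) with a sup-preserving
`Q`-action and a unital left `A`-action, equipped with an inner product. -/
structure PreHilbertModule {A Q : Type*} [Order.Frame A] [Order.Frame Q]
    (GQ : BasedGroupoidQuantale A Q) (X : Type*) [Order.Frame X] where
  smul : Q → X → X          -- `q · x`
  lres : A → X → X          -- `a ▹ x`
  inner : X → X → Q         -- `⟨x, y⟩`
  smul_sSup_left : ∀ (S : Set Q) (x : X), smul (sSup S) x = ⨆ q ∈ S, smul q x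
  smul_sSup_right : ∀ (q : Q) (S : Set X), smul q (sSup S) = ⨆ x ∈ S, smul q x
  mul_smul : ∀ p q x, smul (GQ.mul p q) x = smul p (smul q x)
  lres_top_act : ∀ x, lres ⊤ x = x
  lres_sSup_left : ∀ (S : Set A) (x : X), lres (sSup S) x = ⨆ a ∈ S, lres a x
  lres_sSup_right : ∀ (a : A) (S : Set X), lres a (sSup S) = ⨆ x ∈ S, lres a x
  lres_lres : ∀ a b x, lres a (lres b x) = lres (a ⊓ b) x
  lresQ_smul : ∀ a q x, smul (GQ.lres a q) x = lres a (smul q x)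
  rresQ_smul : ∀ q a x, smul (GQ.rres q a) x = smul q (lres a x)
  lres_inf : ∀ a (x y : X), lres a (x ⊓ y) = lres a x ⊓ y
  inner_smul : ∀ q x y, inner (smul q x) y = GQ.mul q (inner x y)
  lres_inner : ∀ a x, GQ.lres a (inner x ⊤) = inner (lres a x) ⊤
  inner_sSup : ∀ (S : Set X) (y : X), inner (sSup S) y = ⨆ x ∈ S, inner x y
  inner_star : ∀ x y, inner x y = GQ.star (inner y x)

theorem monotone_of_map_sSup {α β : Type*} [CompleteLattice α] [CompleteLattice β] {f : α → β}
    (hf : ∀ S : Set α, f (sSup S) = ⨆ x ∈ S, f x) : Monotone f := by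
  intro a b hab
  calc f a ≤ ⨆ x ∈ ({a, b} : Set α), f x := le_biSup f (Set.mem_insert a {b})
    _ = f b := by rw [← hf, sSup_pair, sup_eq_right.2 hab]

namespace BasedGroupoidQuantale

variable {A Q : Type*} [Order.Frame A] [Order.Frame Q] (GQ : BasedGroupoidQuantale A Q)

theorem star_mono : Monotone GQ.star :=
  monotone_of_map_sSup GQ.star_sSup

theorem suppQ_mono : Monotone GQ.suppQ :=
  monotone_of_map_sSup GQ.suppQ_sSup

end BasedGroupoidQuantale

namespace PreHilbertModule

variable {A Q X : Type*} [Order.Frame A] [Order.Frame Q] [Order.Frame X]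
  {GQ : BasedGroupoidQuantale A Q} (M : PreHilbertModule GQ X)

theorem lres_mono_left (x : X) : Monotone fun a : A => M.lres a x :=
  monotone_of_map_sSup fun S => M.lres_sSup_left S x

theorem lres_mono_right (a : A) : Monotone (M.lres a) :=
  monotone_of_map_sSup (M.lres_sSup_right a)

theorem inner_mono_left (y : X) : Monotone fun x => M.inner x y :=
  monotone_of_map_sSup fun S => M.inner_sSup S y

theorem inner_mono_right (x : X) : Monotone (M.inner x) := by
  intro y y' hy
  rw [M.inner_star x y, M.inner_star x y']
  exact GQ.star_mono (M.inner_mono_left x hy)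

theorem suppQ_inner_self_le_of_le_lres_top {x : X} {a : A} (hx : x ≤ M.lres a ⊤) :
    GQ.suppQ (M.inner x x) ≤ a :=
  calc GQ.suppQ (M.inner x x)
      ≤ GQ.suppQ (M.inner (M.lres a ⊤) ⊤) :=
        GQ.suppQ_mono ((M.inner_mono_right x le_top).trans (M.inner_mono_left ⊤ hx))
    _ = a ⊓ GQ.suppQ (M.inner ⊤ ⊤) := by rw [← M.lres_inner, GQ.suppQ_equivariant]
    _ ≤ a := inf_le_left

variable {ς : X → A}

theorem le_lres_supp_top (hς_restrict : ∀ x, M.lres (ς x) x = x) (x : X) :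
    x ≤ M.lres (ς x) ⊤ :=
  calc x = M.lres (ς x) x := (hς_restrict x).symm
    _ ≤ M.lres (ς x) ⊤ := M.lres_mono_right _ le_top

theorem supp_galoisConnection (hmono : Monotone ς)
    (hς_le : ∀ x, M.lres (ς x) ⊤ ≤ M.smul (M.inner x x) ⊤)
    (hς_restrict : ∀ x, M.lres (ς x) x = x)
    (hς_stable : ∀ (q : Q) (x : X), ς (M.smul q x) ≤ GQ.suppQ q) :
    GaloisConnection ς fun a => M.lres a ⊤ := by
  intro x a
  refine ⟨fun h => (M.le_lres_supp_top hς_restrict x).trans (M.lres_mono_left ⊤ h), fun hx => ?_⟩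
  have x_le_smul : x ≤ M.smul (M.inner x x) ⊤ := (M.le_lres_supp_top hς_restrict x).trans (hς_le x)
  calc ς x ≤ ς (M.smul (M.inner x x) ⊤) := hmono x_le_smul
    _ ≤ GQ.suppQ (M.inner x x) := hς_stable _ ⊤
    _ ≤ a := M.suppQ_inner_self_le_of_le_lres_top hx

end PreHilbertModule

theorem stably_supported_supp_adjoint_general {A Q X : Type*}
    [Order.Frame A] [Order.Frame Q] [Order.Frame X]
    (GQ : BasedGroupoidQuantale A Q) (M : PreHilbertModule GQ X)
    (ς : X → A) (hmono : Monotone ς)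
    (hς_le : ∀ x, M.lres (ς x) ⊤ ≤ M.smul (M.inner x x) ⊤)
    (hς_restrict : ∀ x, M.lres (ς x) x = x)
    (hς_stable : ∀ (q : Q) (x : X), ς (M.smul q x) ≤ GQ.suppQ q) :
    (∀ (x : X) (a : A), ς x ≤ a ↔ x ≤ M.lres a ⊤) ∧
      (∀ S : Set X, ς (sSup S) = ⨆ x ∈ S, ς x) := by
  have gc := M.supp_galoisConnection hmono hς_le hς_restrict hς_stable
  exact ⟨gc, fun _ => gc.l_sSup⟩

/-- Lemma 4.3: for a stably supported `Q`-module `X`, the map `a ↦ a▹1_X` is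
right adjoint to `ς_X : X → A`; in particular `ς_X` preserves arbitrary
suprema. -/
theorem stably_supported_supp_adjoint {A Q X : Type*}
    [Order.Frame A] [Order.Frame Q] [Order.Frame X]
    (GQ : BasedGroupoidQuantale A Q) (M : PreHilbertModule GQ X)
    (hQ_stable : ∀ p q : Q, GQ.suppQ (GQ.mul p q) ≤ GQ.suppQ p)
    (ς : X → A) (hmono : Monotone ς) (hς_top : ς ⊤ = ⊤)
    (hς_le : ∀ x, M.lres (ς x) ⊤ ≤ M.smul (M.inner x x) ⊤)
    (hς_restrict : ∀ x, M.lres (ς x) x = x)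
    (hς_stable : ∀ (q : Q) (x : X), ς (M.smul q x) ≤ GQ.suppQ q) :
    (∀ (x : X) (a : A), ς x ≤ a ↔ x ≤ M.lres a ⊤) ∧
      (∀ S : Set X, ς (sSup S) = ⨆ x ∈ S, ς x) :=
  stably_supported_supp_adjoint_general GQ M ς hmono hς_le hς_restrict hς_stable
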